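/- arXiv:1803.00190 — 2 statements merged into one kernel-verified Lean document; each statement's English description precedes it below -/
import Mathlib

section
/- Let X ⊆ ℝⁿ be a polyhedral set and let ψ(x) = ψ₁(x) + ψ₂(x), where ψ₁ : ℝⁿ → ℝ is convex and ψ₂ is a piecewise affine function, i.e., ψ₂(x) = max_{1≤i≤k₁}((aⁱ)ᵀx + αᵢ) − max_{1≤j≤k₂}((bʲ)ᵀx + βⱼ) for some vectors aⁱ, bʲ ∈ ℝⁿ and scalars αᵢ, βⱼ. Then the set ψ(D_{(ψ,X)}) of d-stationary values of ψ on X is finite. -/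
/-!
Write `ψ₂ = M - N` with `N x = max_j ℓ_j x`, `ℓ_j` affine. Then `ψ` is the pointwise minimum of
the finitely many convex functions `φ_j = ψ₁ + M - ℓ_j`. If `x̄` is d-stationary and `φ_j` touches
`ψ` at `x̄`, every difference quotient of `ψ` at `x̄` towards `y` is bounded by the convex secant
slope `φ_j y - φ_j x̄`, so `x̄` minimises `φ_j` on `X`. Hence `ψ x̄` is one of at most `k₂` minimum
values.
-/

open Matrix Filter Topology

noncomputable def finMax {k : ℕ} (hk : 0 < k) (g : Fin k → ℝ) : ℝ :=
  Finset.univ.sup' (Finset.univ_nonempty_iff.mpr ⟨⟨0, hk⟩⟩) g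

/-- The one-sided directional derivative of `ψ` at `x` in direction `v` equals `L`. -/
def HasDirDeriv {n : ℕ} (ψ : (Fin n → ℝ) → ℝ) (x v : Fin n → ℝ) (L : ℝ) : Prop :=
  Filter.Tendsto (fun δ : ℝ => (ψ (x + δ • v) - ψ x) / δ) (nhdsWithin 0 (Set.Ioi 0)) (nhds L)

/-- `x₀` is a d(irectional)-stationary point of `ψ` on `X`. -/
def DStat {n : ℕ} (ψ : (Fin n → ℝ) → ℝ) (X : Set (Fin n → ℝ)) (x₀ : Fin n → ℝ) : Prop :=
  x₀ ∈ X ∧ ∀ x ∈ X, ∃ L, HasDirDeriv ψ x₀ (x - x₀) L ∧ 0 ≤ L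


/-- A polyhedral subset of ℝⁿ: solution set of finitely many linear inequalities. -/
def IsPolyhedral {n : ℕ} (X : Set (Fin n → ℝ)) : Prop :=
  ∃ (m : ℕ) (A : Fin m → Fin n → ℝ) (b : Fin m → ℝ), X = {x | ∀ i, A i ⬝ᵥ x ≤ b i}

section finMax

variable {k : ℕ} (hk : 0 < k)

theorem le_finMax (g : Fin k → ℝ) (i : Fin k) : g i ≤ finMax hk g :=
  Finset.le_sup' g (Finset.mem_univ i)

theorem exists_finMax_eq (g : Fin k → ℝ) : ∃ i, finMax hk g = g i := by
  obtain ⟨i, -, hi⟩ := Finset.exists_mem_eq_sup' (Finset.univ_nonempty_iff.mpr ⟨⟨0, hk⟩⟩) g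
  exact ⟨i, hi⟩

theorem convexOn_finMax {E : Type*} [AddCommGroup E] [Module ℝ E] {s : Set E}
    {g : Fin k → E → ℝ} (hg : ∀ i, ConvexOn ℝ s (g i)) :
    ConvexOn ℝ s (fun x => finMax hk (fun i => g i x)) := by
  have hsup : (fun x => finMax hk (fun i => g i x)) =
      Finset.univ.sup' (Finset.univ_nonempty_iff.mpr ⟨⟨0, hk⟩⟩) g := by
    ext x
    simp only [finMax, Finset.sup'_apply]
  rw [hsup]
  exact Finset.sup'_induction _ _ (fun _ hf _ hg => hf.sup hg) (fun i _ => hg i)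

end finMax

section DStat

variable {n : ℕ} {ψ f : (Fin n → ℝ) → ℝ}

theorem HasDirDeriv.le_sub_of_convexOn_majorant {s : Set (Fin n → ℝ)} {x y : Fin n → ℝ} {L : ℝ}
    (hL : HasDirDeriv ψ x (y - x) L) (hf : ConvexOn ℝ s f) (hx : x ∈ s) (hy : y ∈ s)
    (hle : ∀ z ∈ s, ψ z ≤ f z) (hxf : ψ x = f x) :
    L ≤ f y - f x := by
  refine le_of_tendsto hL ?_
  filter_upwards [Ioc_mem_nhdsGT_of_mem (⟨le_rfl, one_pos⟩ : (0 : ℝ) ∈ Set.Ico 0 1)]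
    with δ ⟨hδ0, hδ1⟩
  have hz : x + δ • (y - x) = (1 - δ) • x + δ • y := by
    rw [smul_sub, sub_smul, one_smul]
    abel
  have hzs : x + δ • (y - x) ∈ s := hz ▸ hf.1 hx hy (by linarith) hδ0.le (by ring)
  have hsecant : f (x + δ • (y - x)) ≤ (1 - δ) * f x + δ * f y :=
    hz ▸ hf.2 hx hy (by linarith) hδ0.le (by ring)
  rw [div_le_iff₀ hδ0]
  linarith [hle _ hzs]

theorem DStat.le_of_convexOn_majorant {s X : Set (Fin n → ℝ)} {x y : Fin n → ℝ}
    (hst : DStat ψ X x) (hf : ConvexOn ℝ s f) (hXs : X ⊆ s) (hle : ∀ z ∈ s, ψ z ≤ f z)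
    (hxf : ψ x = f x) (hy : y ∈ X) :
    f x ≤ f y := by
  obtain ⟨L, hL, hL0⟩ := hst.2 y hy
  linarith [hL.le_sub_of_convexOn_majorant hf (hXs hst.1) (hXs hy) hle hxf]

theorem finite_image_dStat_of_eq_min_convexOn {ι : Type*} [Finite ι] {X : Set (Fin n → ℝ)}
    (φ : ι → (Fin n → ℝ) → ℝ) (hφ : ∀ j, ConvexOn ℝ Set.univ (φ j))
    (hle : ∀ j x, ψ x ≤ φ j x) (hmin : ∀ x, ∃ j, ψ x = φ j x) :
    (ψ '' {x | DStat ψ X x}).Finite := by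
  have hcover : ψ '' {x | DStat ψ X x} ⊆
      ⋃ j, φ j '' {x | DStat ψ X x ∧ ψ x = φ j x} := by
    rintro _ ⟨x, hx, rfl⟩
    obtain ⟨j, hj⟩ := hmin x
    exact Set.mem_iUnion.2 ⟨j, x, ⟨hx, hj⟩, hj.symm⟩
  refine (Set.finite_iUnion fun j => Set.Subsingleton.finite ?_).subset hcover
  rintro _ ⟨x, ⟨hx, hxj⟩, rfl⟩ _ ⟨y, ⟨hy, hyj⟩, rfl⟩
  have hmaj : ∀ z ∈ Set.univ, ψ z ≤ φ j z := fun z _ => hle j z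
  exact le_antisymm
    (hx.le_of_convexOn_majorant (hφ j) (Set.subset_univ X) hmaj hxj hy.1)
    (hy.le_of_convexOn_majorant (hφ j) (Set.subset_univ X) hmaj hyj hx.1)

end DStat

theorem stmt_3_general {n k₁ k₂ : ℕ} (hk₁ : 0 < k₁) (hk₂ : 0 < k₂)
    (X : Set (Fin n → ℝ))
    (ψ₁ : (Fin n → ℝ) → ℝ) (hψ₁ : ConvexOn ℝ Set.univ ψ₁)
    (a : Fin k₁ → Fin n → ℝ) (α : Fin k₁ → ℝ)
    (b : Fin k₂ → Fin n → ℝ) (β : Fin k₂ → ℝ)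
    (ψ₂ : (Fin n → ℝ) → ℝ)
    (hψ₂ : ∀ x, ψ₂ x = finMax hk₁ (fun i => a i ⬝ᵥ x + α i)
                        - finMax hk₂ (fun j => b j ⬝ᵥ x + β j))
    (ψ : (Fin n → ℝ) → ℝ) (hψ : ∀ x, ψ x = ψ₁ x + ψ₂ x) :
    (ψ '' {x | DStat ψ X x}).Finite := by
  set M := fun x => finMax hk₁ (fun i => a i ⬝ᵥ x + α i)
  set N := fun x => finMax hk₂ (fun j => b j ⬝ᵥ x + β j)
  have hψMN : ∀ x, ψ x = ψ₁ x + M x - N x := fun x => by rw [hψ, hψ₂]; ring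
  have hφ : ∀ j, ConvexOn ℝ Set.univ (fun x => ψ₁ x + M x - (b j ⬝ᵥ x + β j)) := fun j =>
    (hψ₁.add (convexOn_finMax hk₁ fun i =>
      ((dotProductBilin ℝ ℝ (a i)).convexOn convex_univ).add_const (α i))).sub
      (((dotProductBilin ℝ ℝ (b j)).concaveOn convex_univ).add_const (β j))
  refine finite_image_dStat_of_eq_min_convexOn _ hφ (fun j x => ?_) (fun x => ?_)
  · rw [hψMN]
    linarith [le_finMax hk₂ (fun j => b j ⬝ᵥ x + β j) j]
  · obtain ⟨j, hj⟩ := exists_finMax_eq hk₂ (fun j => b j ⬝ᵥ x + β j)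
    exact ⟨j, by rw [hψMN, ← hj]⟩

/-- Proposition 2(c): for `ψ = ψ₁ + ψ₂` with `ψ₁` convex and `ψ₂` piecewise affine in
difference-max form, the set of d-stationary values of `ψ` on a polyhedral set is finite. -/
theorem stmt_3 {n k₁ k₂ : ℕ} (hk₁ : 0 < k₁) (hk₂ : 0 < k₂)
    (X : Set (Fin n → ℝ)) (hX : IsPolyhedral X)
    (ψ₁ : (Fin n → ℝ) → ℝ) (hψ₁ : ConvexOn ℝ Set.univ ψ₁)
    (a : Fin k₁ → Fin n → ℝ) (α : Fin k₁ → ℝ)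
    (b : Fin k₂ → Fin n → ℝ) (β : Fin k₂ → ℝ)
    (ψ₂ : (Fin n → ℝ) → ℝ)
    (hψ₂ : ∀ x, ψ₂ x = finMax hk₁ (fun i => a i ⬝ᵥ x + α i)
                        - finMax hk₂ (fun j => b j ⬝ᵥ x + β j))
    (ψ : (Fin n → ℝ) → ℝ) (hψ : ∀ x, ψ x = ψ₁ x + ψ₂ x) :
    (ψ '' {x | DStat ψ X x}).Finite :=
  stmt_3_general hk₁ hk₂ X ψ₁ hψ₁ a α b β ψ₂ hψ₂ ψ hψ
end

section
/- Let X ⊆ ℝⁿ be a polyhedral set and ψ(x) = max_{1≤i≤k₁} ψ₁ᵢ(x) − max_{1≤j≤k₂} ψ₂ⱼ(x), where every ψ₁ᵢ and ψ₂ⱼ is a quadratic function. For an arbitrary tuple c = (cⁱ)_{i=1}^{k₁} of vectors in ℝⁿ, let S_c = { x ∈ X : the vector ∇ψ₁ᵢ(x) + cⁱ is the same for all i ∈ argmax_{1≤i≤k₁} ψ₁ᵢ(x) }. Then the set ψ(S_c ∩ D_{(ψ,X)}) is finite. -/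
/-!
There are finitely many patterns (active pieces of both maxima, active constraints of `X`), so it
suffices that two points `x`, `y` of `S_c ∩ D_(ψ,X)` with the same pattern have `ψ x = ψ y`. By
the common active constraints, the segment `[x, y]` extends a little beyond both ends inside `X`.
The increment of a quadratic along `[x, y]` is the mean of its end-point derivatives; since on
`S_c` the active gradients of the first maximum differ only by the constants `cⁱ`, its active
pieces share one derivative along `y - x`, at `x` and at `y`. So the first maximum is linear along
`±(y - x)`, and d-stationarity in both directions gives the active pieces of the second maximum
that same derivative. Averaging end-point derivatives again, both maxima grow equally from `x`
to `y`.
-/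

open Matrix Filter Topology

open Finset

section Quadratic

variable {m : Type*} [Fintype m]

lemma Matrix.IsSymm.dotProduct_mulVec_comm {R : Type*} [CommSemiring R] {Q : Matrix m m R}
    (hQ : Q.IsSymm) (x y : m → R) : x ⬝ᵥ Q *ᵥ y = y ⬝ᵥ Q *ᵥ x := by
  rw [dotProduct_mulVec, ← mulVec_transpose, hQ.eq, dotProduct_comm]

noncomputable def quadratic (Q : Matrix m m ℝ) (q : m → ℝ) (α : ℝ) (x : m → ℝ) : ℝ :=
  (1/2) * (x ⬝ᵥ Q *ᵥ x) + q ⬝ᵥ x + α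

variable {Q : Matrix m m ℝ} (q : m → ℝ) (α : ℝ)

lemma quadratic_add_smul (hQ : Q.IsSymm) (x v : m → ℝ) (δ : ℝ) :
    quadratic Q q α (x + δ • v) =
      quadratic Q q α x + δ * ((Q *ᵥ x + q) ⬝ᵥ v) + δ ^ 2 * ((1/2) * (v ⬝ᵥ Q *ᵥ v)) := by
  simp only [quadratic, mulVec_add, mulVec_smul, dotProduct_add, add_dotProduct,
    dotProduct_smul, smul_dotProduct, smul_eq_mul, hQ.dotProduct_mulVec_comm x v,
    dotProduct_comm (Q *ᵥ x) v]
  ring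

lemma quadratic_sub_quadratic (hQ : Q.IsSymm) (x y : m → ℝ) :
    quadratic Q q α y - quadratic Q q α x =
      (1/2) * (((Q *ᵥ x + q) + (Q *ᵥ y + q)) ⬝ᵥ (y - x)) := by
  have h := quadratic_add_smul q α hQ x (y - x) 1
  rw [one_smul, add_sub_cancel] at h
  rw [h, show y = x + (y - x) by abel, mulVec_add]
  simp only [add_sub_cancel_left, add_dotProduct, dotProduct_comm (Q *ᵥ (y - x))]
  ring

end Quadratic

section DirectionalDerivative

variable {n : ℕ} {f g : (Fin n → ℝ) → ℝ} {x v : Fin n → ℝ} {a b : ℝ}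

lemma HasDirDeriv.sub (hf : HasDirDeriv f x v a) (hg : HasDirDeriv g x v b) :
    HasDirDeriv (fun y => f y - g y) x v (a - b) :=
  (Filter.Tendsto.sub hf hg).congr fun δ => by ring

lemma HasDirDeriv.tendsto_apply_add_smul (hf : HasDirDeriv f x v a) :
    Tendsto (fun δ : ℝ => f (x + δ • v)) (𝓝[>] 0) (𝓝 (f x)) := by
  have h : Tendsto (fun δ : ℝ => f x + δ * ((f (x + δ • v) - f x) / δ)) (𝓝[>] 0)
      (𝓝 (f x + 0 * a)) :=
    tendsto_const_nhds.add ((tendsto_nhdsWithin_of_tendsto_nhds tendsto_id).mul hf)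
  rw [zero_mul, add_zero] at h
  refine h.congr' ?_
  filter_upwards [self_mem_nhdsWithin] with δ (hδ : 0 < δ)
  field_simp
  ring

lemma hasDirDeriv_quadratic {Q : Matrix (Fin n) (Fin n) ℝ} (hQ : Q.IsSymm) (q : Fin n → ℝ)
    (α : ℝ) (x v : Fin n → ℝ) : HasDirDeriv (quadratic Q q α) x v ((Q *ᵥ x + q) ⬝ᵥ v) := by
  have h : Tendsto (fun δ : ℝ => (Q *ᵥ x + q) ⬝ᵥ v + δ * ((1/2) * (v ⬝ᵥ Q *ᵥ v))) (𝓝[>] 0)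
      (𝓝 ((Q *ᵥ x + q) ⬝ᵥ v)) := by
    refine tendsto_nhdsWithin_of_tendsto_nhds ((Continuous.tendsto' ?_ 0 _ (by simp)))
    fun_prop
  refine h.congr' ?_
  filter_upwards [self_mem_nhdsWithin] with δ (hδ : 0 < δ)
  rw [quadratic_add_smul q α hQ]
  field_simp
  ring

lemma DStat.nonneg_of_hasDirDeriv {X : Set (Fin n → ℝ)} {z : Fin n → ℝ} (hx : DStat f X x)
    (hz : z ∈ X) (hf : HasDirDeriv f x (z - x) a) : 0 ≤ a := by
  obtain ⟨L, hL, hL_nonneg⟩ := hx.2 z hz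
  rwa [tendsto_nhds_unique hf hL]

end DirectionalDerivative

section ActiveIndices

variable {ι : Type*} [Fintype ι] (g : ι → ℝ)

noncomputable def activeIndices : Finset ι := {i | ∀ j, g j ≤ g i}

variable {g}

@[simp]
lemma mem_activeIndices {i : ι} : i ∈ activeIndices g ↔ ∀ j, g j ≤ g i := by
  simp [activeIndices]

lemma activeIndices_nonempty [Nonempty ι] (g : ι → ℝ) : (activeIndices g).Nonempty := by
  obtain ⟨i, -, hi⟩ := exists_max_image univ g univ_nonempty
  exact ⟨i, mem_activeIndices.2 fun j => hi j (mem_univ j)⟩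

lemma eq_of_mem_activeIndices {i i' : ι} (hi : i ∈ activeIndices g)
    (hi' : i' ∈ activeIndices g) : g i = g i' :=
  le_antisymm (mem_activeIndices.1 hi' i) (mem_activeIndices.1 hi i')

lemma sup'_univ_eq_of_mem_activeIndices [Nonempty ι] {i : ι} (hi : i ∈ activeIndices g) :
    univ.sup' univ_nonempty g = g i :=
  le_antisymm (sup'_le _ _ fun j _ => mem_activeIndices.1 hi j) (le_sup' g (mem_univ i))

end ActiveIndices

/-- Danskin's formula for a finite maximum. -/
theorem hasDirDeriv_sup' {n : ℕ} {ι : Type*} [Fintype ι] [Nonempty ι]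
    {f : ι → (Fin n → ℝ) → ℝ} {x v : Fin n → ℝ} {b : ι → ℝ}
    (hf : ∀ i, HasDirDeriv (f i) x v (b i)) :
    HasDirDeriv (fun y => univ.sup' univ_nonempty (f · y)) x v
      ((activeIndices (f · x)).sup' (activeIndices_nonempty _) b) := by
  set I := activeIndices (f · x)
  have hI : I.Nonempty := activeIndices_nonempty _
  have ⟨i₀, hi₀⟩ := hI
  have hM : ∀ i ∈ I, f i x = univ.sup' univ_nonempty (f · x) := fun i hi =>
    (sup'_univ_eq_of_mem_activeIndices hi).symm
  have h_dominated : ∀ i, ∀ᶠ δ in 𝓝[>] (0 : ℝ),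
      f i (x + δ • v) ≤ I.sup' hI (f · (x + δ • v)) := by
    intro i
    by_cases hi : i ∈ I
    · exact Eventually.of_forall fun δ => le_sup' (f · (x + δ • v)) hi
    have hlt : f i x < f i₀ x := by
      simp only [I, mem_activeIndices, not_forall, not_le] at hi
      obtain ⟨j, hj⟩ := hi
      exact hj.trans_le (mem_activeIndices.1 hi₀ j)
    filter_upwards [((hf i).tendsto_apply_add_smul.prodMk_nhds
      (hf i₀).tendsto_apply_add_smul).eventually (isOpen_lt_prod.mem_nhds hlt)] with δ hδ
    exact hδ.le.trans (le_sup' (f · (x + δ • v)) hi₀)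
  refine (Tendsto.finset_sup'_nhds_apply hI fun i _ => hf i).congr' ?_
  filter_upwards [eventually_all.2 h_dominated, self_mem_nhdsWithin] with δ hδ (hδ_pos : 0 < δ)
  have h_sup : univ.sup' univ_nonempty (f · (x + δ • v)) = I.sup' hI (f · (x + δ • v)) :=
    le_antisymm (sup'_le _ _ fun i _ => hδ i) (sup'_mono _ (subset_univ I) _)
  rw [h_sup, sub_eq_add_neg, sup'_add, sup'_div₀ hδ_pos.le]
  exact sup'_congr _ rfl fun i hi => by rw [hM i hi, sub_eq_add_neg]

section Stationarity

variable {n : ℕ} {ι κ : Type*} [Fintype ι] [Nonempty ι] [Fintype κ] [Nonempty κ]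
  {f₁ : ι → (Fin n → ℝ) → ℝ} {f₂ : κ → (Fin n → ℝ) → ℝ} {G₁ : ι → Fin n → ℝ}
  {G₂ : κ → Fin n → ℝ} {X : Set (Fin n → ℝ)} {x : Fin n → ℝ} {d : ℝ}

lemma DStat.inner_le_of_mem_activeIndices (hf₁ : ∀ i v, HasDirDeriv (f₁ i) x v (G₁ i ⬝ᵥ v))
    (hf₂ : ∀ j v, HasDirDeriv (f₂ j) x v (G₂ j ⬝ᵥ v))
    (hx : DStat (fun y => univ.sup' univ_nonempty (f₁ · y) - univ.sup' univ_nonempty (f₂ · y))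
      X x)
    {z : Fin n → ℝ} (hz : z ∈ X) (hd : ∀ i ∈ activeIndices (f₁ · x), G₁ i ⬝ᵥ (z - x) = d)
    {j : κ} (hj : j ∈ activeIndices (f₂ · x)) : G₂ j ⬝ᵥ (z - x) ≤ d := by
  have h := hx.nonneg_of_hasDirDeriv hz
    ((hasDirDeriv_sup' fun i => hf₁ i (z - x)).sub (hasDirDeriv_sup' fun j => hf₂ j (z - x)))
  rw [sup'_eq_of_forall _ _ hd] at h
  have := le_sup' (fun j => G₂ j ⬝ᵥ (z - x)) hj
  linarith

/-- The first maximum is linear along `±(y - x)`, so stationarity in both directions squeezes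
the derivatives of the active pieces of the second maximum to `d`. -/
lemma DStat.inner_eq_of_mem_activeIndices (hf₁ : ∀ i v, HasDirDeriv (f₁ i) x v (G₁ i ⬝ᵥ v))
    (hf₂ : ∀ j v, HasDirDeriv (f₂ j) x v (G₂ j ⬝ᵥ v))
    (hx : DStat (fun y => univ.sup' univ_nonempty (f₁ · y) - univ.sup' univ_nonempty (f₂ · y))
      X x)
    {y : Fin n → ℝ} (hy : y ∈ X) {ε : ℝ} (hε : 0 < ε) (hy' : x - ε • (y - x) ∈ X)
    (hd : ∀ i ∈ activeIndices (f₁ · x), G₁ i ⬝ᵥ (y - x) = d)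
    {j : κ} (hj : j ∈ activeIndices (f₂ · x)) : G₂ j ⬝ᵥ (y - x) = d := by
  refine le_antisymm (hx.inner_le_of_mem_activeIndices hf₁ hf₂ hy hd hj) ?_
  have h_dir : x - ε • (y - x) - x = (-ε) • (y - x) := by module
  have h := hx.inner_le_of_mem_activeIndices hf₁ hf₂ hy' (d := -ε * d)
    (fun i hi => by rw [h_dir, dotProduct_smul, hd i hi, smul_eq_mul]) hj
  rw [h_dir, dotProduct_smul, smul_eq_mul] at h
  nlinarith

end Stationarity

lemma exists_pos_sub_smul_mem_of_active {m ι : Type*} [Fintype m] [Finite ι]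
    {A : ι → m → ℝ} {b : ι → ℝ} {x y : m → ℝ} (hx : ∀ k, A k ⬝ᵥ x ≤ b k)
    (hxy : ∀ k, A k ⬝ᵥ x = b k → A k ⬝ᵥ y = b k) :
    ∃ ε : ℝ, 0 < ε ∧ ∀ k, A k ⬝ᵥ (x - ε • (y - x)) ≤ b k := by
  have h : ∀ k, ∀ᶠ ε in 𝓝 (0 : ℝ), A k ⬝ᵥ (x - ε • (y - x)) ≤ b k := by
    intro k
    have h_lin : ∀ ε : ℝ,
        A k ⬝ᵥ (x - ε • (y - x)) = A k ⬝ᵥ x - ε * (A k ⬝ᵥ y - A k ⬝ᵥ x) := fun ε => by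
      rw [dotProduct_sub, dotProduct_smul, dotProduct_sub, smul_eq_mul]
    rcases (hx k).eq_or_lt with h_active | h_inactive
    · exact Eventually.of_forall fun ε => by rw [h_lin, hxy k h_active, h_active]; simp
    have h_lim : Tendsto (fun ε : ℝ => A k ⬝ᵥ x - ε * (A k ⬝ᵥ y - A k ⬝ᵥ x)) (𝓝 0)
        (𝓝 (A k ⬝ᵥ x)) := Continuous.tendsto' (by fun_prop) _ _ (by simp)
    filter_upwards [h_lim.eventually (eventually_lt_nhds h_inactive)] with ε hε
    exact (h_lin ε).trans_le hε.le
  obtain ⟨ε, hε, hε_pos⟩ :=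
    ((eventually_nhdsWithin_of_eventually_nhds (eventually_all.2 h)).and
      self_mem_nhdsWithin).exists (f := 𝓝[>] (0 : ℝ))
  exact ⟨ε, hε_pos, hε⟩

theorem Set.finite_image_of_constant_on_fibers {α β γ : Type*} [Finite β] {s : Set α}
    (f : α → γ) (p : α → β) (h : ∀ x ∈ s, ∀ y ∈ s, p x = p y → f x = f y) :
    (f '' s).Finite := by
  refine (Set.finite_iUnion fun c : β =>
    (?_ : (f '' (s ∩ p ⁻¹' {c})).Subsingleton).finite).subset ?_
  · rintro _ ⟨x, ⟨hx, hpx⟩, rfl⟩ _ ⟨y, ⟨hy, hpy⟩, rfl⟩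
    exact h x hx y hy (hpx.trans hpy.symm)
  · rintro _ ⟨x, hx, rfl⟩
    exact Set.mem_iUnion.2 ⟨p x, x, ⟨hx, rfl⟩, rfl⟩

/-- The increment of a quadratic is the mean of its end-point derivatives, and the two gradients
differ by the same vector `c' - c` at both ends. -/
lemma inner_grad_eq_of_quadratic_eq {m : Type*} [Fintype m] {Q Q' : Matrix m m ℝ}
    (hQ : Q.IsSymm) (hQ' : Q'.IsSymm) {q q' c c' x y : m → ℝ} {α α' : ℝ}
    (hx : quadratic Q q α x = quadratic Q' q' α' x)
    (hy : quadratic Q q α y = quadratic Q' q' α' y)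
    (hgx : Q *ᵥ x + q + c = Q' *ᵥ x + q' + c') (hgy : Q *ᵥ y + q + c = Q' *ᵥ y + q' + c') :
    (Q *ᵥ x + q) ⬝ᵥ (y - x) = (Q' *ᵥ x + q') ⬝ᵥ (y - x) := by
  have e := quadratic_sub_quadratic q α hQ x y
  have e' := quadratic_sub_quadratic q' α' hQ' x y
  have hx' := congrArg (· ⬝ᵥ (y - x)) hgx
  have hy' := congrArg (· ⬝ᵥ (y - x)) hgy
  simp only [add_dotProduct] at e e' hx' hy' ⊢
  linarith

section DCQuadratic

variable {n : ℕ} {ι κ ι' : Type*} [Fintype ι] [Nonempty ι] [Fintype κ] [Nonempty κ] [Finite ι']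
  {Q₁ : ι → Matrix (Fin n) (Fin n) ℝ} {q₁ : ι → Fin n → ℝ} {α₁ : ι → ℝ}
  {Q₂ : κ → Matrix (Fin n) (Fin n) ℝ} {q₂ : κ → Fin n → ℝ} {α₂ : κ → ℝ}
  {A : ι' → Fin n → ℝ} {b : ι' → ℝ} {c : ι → Fin n → ℝ} {x y wx wy : Fin n → ℝ}

lemma DStat.inner_grad_eq_of_activeIndices_eq (hQ₁ : ∀ i, (Q₁ i).IsSymm)
    (hQ₂ : ∀ j, (Q₂ j).IsSymm)
    (hx : DStat (fun z => univ.sup' univ_nonempty (fun i => quadratic (Q₁ i) (q₁ i) (α₁ i) z) -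
      univ.sup' univ_nonempty (fun j => quadratic (Q₂ j) (q₂ j) (α₂ j) z))
      {z | ∀ k, A k ⬝ᵥ z ≤ b k} x)
    (hy : ∀ k, A k ⬝ᵥ y ≤ b k) (hxy : ∀ k, A k ⬝ᵥ x = b k → A k ⬝ᵥ y = b k)
    (hwx : ∀ i ∈ activeIndices (fun i => quadratic (Q₁ i) (q₁ i) (α₁ i) x),
      Q₁ i *ᵥ x + q₁ i + c i = wx)
    (hwy : ∀ i ∈ activeIndices (fun i => quadratic (Q₁ i) (q₁ i) (α₁ i) y),
      Q₁ i *ᵥ y + q₁ i + c i = wy)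
    (hI : activeIndices (fun i => quadratic (Q₁ i) (q₁ i) (α₁ i) x) =
      activeIndices (fun i => quadratic (Q₁ i) (q₁ i) (α₁ i) y))
    {i : ι} (hi : i ∈ activeIndices (fun i => quadratic (Q₁ i) (q₁ i) (α₁ i) x))
    {j : κ} (hj : j ∈ activeIndices (fun j => quadratic (Q₂ j) (q₂ j) (α₂ j) x)) :
    (Q₂ j *ᵥ x + q₂ j) ⬝ᵥ (y - x) = (Q₁ i *ᵥ x + q₁ i) ⬝ᵥ (y - x) := by
  obtain ⟨ε, hε, hε_mem⟩ := exists_pos_sub_smul_mem_of_active hx.1 hxy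
  refine hx.inner_eq_of_mem_activeIndices (fun i => hasDirDeriv_quadratic (hQ₁ i) _ _ x)
    (fun j => hasDirDeriv_quadratic (hQ₂ j) _ _ x) hy hε hε_mem (fun i' hi' => ?_) hj
  have hiy := hI ▸ hi
  have hi'y := hI ▸ hi'
  exact inner_grad_eq_of_quadratic_eq (hQ₁ i') (hQ₁ i) (eq_of_mem_activeIndices hi' hi)
    (eq_of_mem_activeIndices hi'y hiy) ((hwx i' hi').trans (hwx i hi).symm)
    ((hwy i' hi'y).trans (hwy i hiy).symm)

theorem DStat.sub_sup'_quadratic_eq (hQ₁ : ∀ i, (Q₁ i).IsSymm) (hQ₂ : ∀ j, (Q₂ j).IsSymm)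
    (hx : DStat (fun z => univ.sup' univ_nonempty (fun i => quadratic (Q₁ i) (q₁ i) (α₁ i) z) -
      univ.sup' univ_nonempty (fun j => quadratic (Q₂ j) (q₂ j) (α₂ j) z))
      {z | ∀ k, A k ⬝ᵥ z ≤ b k} x)
    (hy : DStat (fun z => univ.sup' univ_nonempty (fun i => quadratic (Q₁ i) (q₁ i) (α₁ i) z) -
      univ.sup' univ_nonempty (fun j => quadratic (Q₂ j) (q₂ j) (α₂ j) z))
      {z | ∀ k, A k ⬝ᵥ z ≤ b k} y)
    (hwx : ∀ i ∈ activeIndices (fun i => quadratic (Q₁ i) (q₁ i) (α₁ i) x),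
      Q₁ i *ᵥ x + q₁ i + c i = wx)
    (hwy : ∀ i ∈ activeIndices (fun i => quadratic (Q₁ i) (q₁ i) (α₁ i) y),
      Q₁ i *ᵥ y + q₁ i + c i = wy)
    (hI : activeIndices (fun i => quadratic (Q₁ i) (q₁ i) (α₁ i) x) =
      activeIndices (fun i => quadratic (Q₁ i) (q₁ i) (α₁ i) y))
    (hJ : activeIndices (fun j => quadratic (Q₂ j) (q₂ j) (α₂ j) x) =
      activeIndices (fun j => quadratic (Q₂ j) (q₂ j) (α₂ j) y))
    (hA : ∀ k, A k ⬝ᵥ x = b k ↔ A k ⬝ᵥ y = b k) :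
    univ.sup' univ_nonempty (fun i => quadratic (Q₁ i) (q₁ i) (α₁ i) x) -
      univ.sup' univ_nonempty (fun j => quadratic (Q₂ j) (q₂ j) (α₂ j) x) =
    univ.sup' univ_nonempty (fun i => quadratic (Q₁ i) (q₁ i) (α₁ i) y) -
      univ.sup' univ_nonempty (fun j => quadratic (Q₂ j) (q₂ j) (α₂ j) y) := by
  obtain ⟨i, hi⟩ := activeIndices_nonempty fun i => quadratic (Q₁ i) (q₁ i) (α₁ i) x
  obtain ⟨j, hj⟩ := activeIndices_nonempty fun j => quadratic (Q₂ j) (q₂ j) (α₂ j) x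
  have hiy := hI ▸ hi
  have hjy := hJ ▸ hj
  have h_at_x := hx.inner_grad_eq_of_activeIndices_eq hQ₁ hQ₂ hy.1 (fun k => (hA k).1)
    hwx hwy hI hi hj
  have h_at_y := hy.inner_grad_eq_of_activeIndices_eq hQ₁ hQ₂ hx.1 (fun k => (hA k).2)
    hwy hwx hI.symm hiy hjy
  rw [← neg_sub y x, dotProduct_neg, dotProduct_neg, neg_inj] at h_at_y
  have e₁ := quadratic_sub_quadratic (q₁ i) (α₁ i) (hQ₁ i) x y
  have e₂ := quadratic_sub_quadratic (q₂ j) (α₂ j) (hQ₂ j) x y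
  rw [sup'_univ_eq_of_mem_activeIndices hi, sup'_univ_eq_of_mem_activeIndices hj,
    sup'_univ_eq_of_mem_activeIndices hiy, sup'_univ_eq_of_mem_activeIndices hjy]
  rw [add_dotProduct] at e₁ e₂
  linarith

end DCQuadratic

/-- Proposition 4: for `ψ = max_i ψ₁ᵢ - max_j ψ₂ⱼ` with all pieces quadratic and an
arbitrary tuple `c` of vectors, `ψ` takes only finitely many values on `S_c ∩ D_{(ψ,X)}`,
where `S_c` is the set of `x ∈ X` such that `∇ψ₁ᵢ(x) + cⁱ` is a common vector for all
`i` in the argmax of the first max. -/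
theorem stmt_5 {n k₁ k₂ : ℕ} (hk₁ : 0 < k₁) (hk₂ : 0 < k₂)
    (X : Set (Fin n → ℝ)) (hX : IsPolyhedral X)
    (Q₁ : Fin k₁ → Matrix (Fin n) (Fin n) ℝ) (q₁ : Fin k₁ → Fin n → ℝ) (α₁ : Fin k₁ → ℝ)
    (hQ₁ : ∀ i, (Q₁ i).IsSymm)
    (Q₂ : Fin k₂ → Matrix (Fin n) (Fin n) ℝ) (q₂ : Fin k₂ → Fin n → ℝ) (α₂ : Fin k₂ → ℝ)
    (hQ₂ : ∀ j, (Q₂ j).IsSymm)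
    (ψ₁ : Fin k₁ → (Fin n → ℝ) → ℝ)
    (hψ₁ : ∀ i x, ψ₁ i x = (1/2) * (x ⬝ᵥ (Q₁ i).mulVec x) + q₁ i ⬝ᵥ x + α₁ i)
    (ψ₂ : Fin k₂ → (Fin n → ℝ) → ℝ)
    (hψ₂ : ∀ j x, ψ₂ j x = (1/2) * (x ⬝ᵥ (Q₂ j).mulVec x) + q₂ j ⬝ᵥ x + α₂ j)
    (ψ : (Fin n → ℝ) → ℝ)
    (hψ : ∀ x, ψ x = finMax hk₁ (fun i => ψ₁ i x) - finMax hk₂ (fun j => ψ₂ j x))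
    (c : Fin k₁ → Fin n → ℝ) (Sc : Set (Fin n → ℝ))
    (hSc : Sc = {x ∈ X | ∃ w : Fin n → ℝ,
      ∀ i, (∀ j, ψ₁ j x ≤ ψ₁ i x) → (Q₁ i).mulVec x + q₁ i + c i = w}) :
    (ψ '' (Sc ∩ {x | DStat ψ X x})).Finite := by
  obtain ⟨m, A, b, rfl⟩ := hX
  obtain rfl : ψ₁ = fun i => quadratic (Q₁ i) (q₁ i) (α₁ i) := funext₂ hψ₁
  obtain rfl : ψ₂ = fun j => quadratic (Q₂ j) (q₂ j) (α₂ j) := funext₂ hψ₂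
  obtain rfl := funext hψ
  subst hSc
  have : Nonempty (Fin k₁) := ⟨⟨0, hk₁⟩⟩
  have : Nonempty (Fin k₂) := ⟨⟨0, hk₂⟩⟩
  refine Set.finite_image_of_constant_on_fibers _ (fun x =>
    (activeIndices fun i => quadratic (Q₁ i) (q₁ i) (α₁ i) x,
      activeIndices fun j => quadratic (Q₂ j) (q₂ j) (α₂ j) x, {k | A k ⬝ᵥ x = b k})) ?_
  rintro x ⟨⟨-, wx, hwx⟩, hx⟩ y ⟨⟨-, wy, hwy⟩, hy⟩ h_pattern
  simp only [Prod.mk.injEq, Set.ext_iff, Set.mem_ofPred_eq] at h_pattern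
  obtain ⟨hI, hJ, hA⟩ := h_pattern
  exact hx.sub_sup'_quadratic_eq hQ₁ hQ₂ hy (fun i hi => hwx i (mem_activeIndices.1 hi))
    (fun i hi => hwy i (mem_activeIndices.1 hi)) hI hJ hA
end
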